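/- arXiv:1302.0400 — 3 statements merged into one kernel-verified Lean document; each statement's English description precedes it below -/
import Mathlib

section
/- There exists a constant A > 0 (depending only on l) such that for all D ≥ l, (1/D)·∫₀^D ((p(x) − p₀(x))/D²)² dx ≤ A·(l/D)², where p, p₀, C are as in the 1D example. -/
open Real

set_option maxHeartbeats 1000000 in
/-- Rate of convergence in L²: (1/D)∫₀^D ((p−p₀)/D²)² ≤ A (l/D)², A depending only on l. -/
theorem L2_rate_p_p0
    (l : ℝ) (hl : 0 < l) :
    ∃ A > 0, ∀ D ≥ l, ∀ C : ℝ, ∀ p p₀ : ℝ → ℝ,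
      C = (l / (2 * Real.pi)) * Real.sin (2 * Real.pi * D / l)
        + (l / (2 * Real.pi))^2 * (1 / D) * Real.cos (2 * Real.pi * D / l)
        - (l / (2 * Real.pi))^2 * (1 / D) →
      (∀ x, p x = x^2 / 2 - (D / 2) * x
        + x * (l / (2 * Real.pi)) * Real.sin (2 * Real.pi * x / l)
        + (l / (2 * Real.pi))^2 * Real.cos (2 * Real.pi * x / l)
        - C * x - (l / (2 * Real.pi))^2) →
      (∀ x, p₀ x = x^2 / 2 - (D / 2) * x) →
      (1 / D) * ∫ x in (0:ℝ)..D, ((p x - p₀ x) / D^2)^2 ≤ A * (l / D)^2 := by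
  refine ⟨1, one_pos, ?_⟩
  intro D hD C p p₀ hC hp hp0
  have hD0 : 0 < D := lt_of_lt_of_le hl hD
  have hπ := Real.pi_pos
  have hπ3 := Real.pi_gt_three
  set k := l / (2 * Real.pi) with hk
  have hk0 : 0 < k := by rw [hk]; positivity
  clear_value k
  -- bound on |C * D|
  have hCDbound : |C * D| ≤ k * D + 2 * k ^ 2 := by
    have h1 := Real.neg_one_le_sin (2 * Real.pi * D / l)
    have h1' := Real.sin_le_one (2 * Real.pi * D / l)
    have h2 := Real.neg_one_le_cos (2 * Real.pi * D / l)
    have h2' := Real.cos_le_one (2 * Real.pi * D / l)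
    have hCD : C * D = k * Real.sin (2 * Real.pi * D / l) * D
        + k ^ 2 * Real.cos (2 * Real.pi * D / l) - k ^ 2 := by
      rw [hC]; field_simp
    rw [hCD, abs_le]
    constructor <;> nlinarith [mul_pos hk0 hD0, sq_nonneg k,
      mul_nonneg (mul_nonneg hk0.le hD0.le)
        (by linarith : 0 ≤ 1 - Real.sin (2 * Real.pi * D / l)),
      mul_nonneg (mul_nonneg hk0.le hD0.le)
        (by linarith : 0 ≤ 1 + Real.sin (2 * Real.pi * D / l)),
      mul_nonneg (sq_nonneg k) (by linarith : 0 ≤ 1 - Real.cos (2 * Real.pi * D / l)),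
      mul_nonneg (sq_nonneg k) (by linarith : 0 ≤ 1 + Real.cos (2 * Real.pi * D / l))]
  -- rewrite the integrand
  have hPP : ∀ x, p x - p₀ x
      = x * k * Real.sin (2 * Real.pi * x / l)
        + k ^ 2 * Real.cos (2 * Real.pi * x / l) - C * x - k ^ 2 := by
    intro x; rw [hp, hp0]; ring
  -- pointwise bound |p x - p₀ x| ≤ D * l on [0, D]
  have hnum : ∀ x ∈ Set.Icc (0:ℝ) D, |p x - p₀ x| ≤ D * l := by
    intro x hx
    obtain ⟨hx0, hxD⟩ := hx
    rw [hPP]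
    have h1 := Real.neg_one_le_sin (2 * Real.pi * x / l)
    have h1' := Real.sin_le_one (2 * Real.pi * x / l)
    have h2 := Real.neg_one_le_cos (2 * Real.pi * x / l)
    have h2' := Real.cos_le_one (2 * Real.pi * x / l)
    have hCx : |C * x| ≤ k * D + 2 * k ^ 2 := by
      rw [abs_mul]
      calc |C| * |x| ≤ |C| * D := by
            apply mul_le_mul_of_nonneg_left _ (abs_nonneg C)
            rw [abs_of_nonneg hx0]; exact hxD
        _ = |C * D| := by rw [abs_mul, abs_of_pos hD0]
        _ ≤ _ := hCDbound
    have hCx1 : C * x ≤ k * D + 2 * k ^ 2 := le_trans (le_abs_self _) hCx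
    have hCx2 : -(k * D + 2 * k ^ 2) ≤ C * x := by
      have := neg_abs_le (C * x); linarith
    -- key: 2*D*k + 4*k^2 ≤ D*l
    have hkey : 2 * (D * k) + 4 * k ^ 2 ≤ D * l := by
      have hkl : 2 * Real.pi * k = l := by rw [hk]; field_simp
      nlinarith [mul_pos hD0 hk0, sq_nonneg k, mul_le_mul_of_nonneg_right hD hl.le,
        mul_pos hl hk0]
    rw [abs_le]
    constructor <;> nlinarith [mul_le_mul_of_nonneg_left h1' (mul_nonneg hx0 hk0.le),
      mul_le_mul_of_nonneg_left h1 (mul_nonneg hx0 hk0.le),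
      mul_le_mul_of_nonneg_left h2' (sq_nonneg k),
      mul_le_mul_of_nonneg_left h2 (sq_nonneg k),
      mul_le_mul_of_nonneg_right hxD hk0.le]
  -- pointwise bound on the squared integrand
  have hsq : ∀ x ∈ Set.Icc (0:ℝ) D, ((p x - p₀ x) / D ^ 2) ^ 2 ≤ (l / D) ^ 2 := by
    intro x hx
    have h := hnum x hx
    have habs : |(p x - p₀ x) / D ^ 2| ≤ l / D := by
      rw [abs_div, abs_of_pos (by positivity : (0:ℝ) < D ^ 2)]
      calc |p x - p₀ x| / D ^ 2 ≤ (D * l) / D ^ 2 := by gcongr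
        _ = l / D := by rw [sq, mul_div_mul_left _ _ hD0.ne']
    calc ((p x - p₀ x) / D ^ 2) ^ 2 = |(p x - p₀ x) / D ^ 2| ^ 2 := (sq_abs _).symm
      _ ≤ (l / D) ^ 2 := by
          apply pow_le_pow_left₀ (abs_nonneg _) habs
  -- integrability
  have hcont : Continuous (fun x => ((p x - p₀ x) / D ^ 2) ^ 2) := by
    have : (fun x => ((p x - p₀ x) / D ^ 2) ^ 2)
        = fun x => ((x * k * Real.sin (2 * Real.pi * x / l)
          + k ^ 2 * Real.cos (2 * Real.pi * x / l) - C * x - k ^ 2) / D ^ 2) ^ 2 := by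
      funext x; rw [hPP]
    rw [this]; fun_prop
  have hint1 : IntervalIntegrable (fun x => ((p x - p₀ x) / D ^ 2) ^ 2)
      MeasureTheory.volume 0 D := hcont.intervalIntegrable 0 D
  have hint2 : IntervalIntegrable (fun _ : ℝ => (l / D) ^ 2)
      MeasureTheory.volume 0 D := intervalIntegrable_const
  have hmono := intervalIntegral.integral_mono_on hD0.le hint1 hint2 hsq
  have hconst : (∫ _ in (0:ℝ)..D, (l / D) ^ 2) = D * (l / D) ^ 2 := by
    simp [intervalIntegral.integral_const, smul_eq_mul]
  rw [hconst] at hmono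
  calc (1 / D) * ∫ x in (0:ℝ)..D, ((p x - p₀ x) / D ^ 2) ^ 2
      ≤ (1 / D) * (D * (l / D) ^ 2) := by
        have h1D : (0:ℝ) ≤ 1 / D := by positivity
        exact mul_le_mul_of_nonneg_left hmono h1D
    _ = 1 * (l / D) ^ 2 := by field_simp
end

section
/- Let f : ℝ → ℝ be continuous and 1-periodic with ∫₀¹ f(y) dy = 0, and let ε > 0. Then for any φ ∈ C_c^∞((0,1)), |∫₀¹ f(x/ε) φ(x) dx| ≤ ε · (sup_{y∈[0,1]} |∫₀^y f|) · ∫₀¹ |φ'(x)| dx. -/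
open Real

theorem F_aux_hasDerivAt (f : ℝ → ℝ) (hf : Continuous f) (t : ℝ) :
    HasDerivAt (fun u => ∫ s in (0:ℝ)..u, f s) (f t) t :=
  intervalIntegral.integral_hasDerivAt_right (hf.intervalIntegrable 0 t)
    (hf.stronglyMeasurableAtFilter _ _) hf.continuousAt

/-- Quantitative weak H⁻¹ estimate for a mean-zero 1-periodic oscillating function. -/
theorem weak_Hminus1_estimate
    (f : ℝ → ℝ) (hf : Continuous f) (hper : ∀ y, f (y + 1) = f y)
    (hmean : (∫ y in (0:ℝ)..1, f y) = 0)
    (ε : ℝ) (hε : 0 < ε)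
    (φ : ℝ → ℝ) (hφ : ContDiff ℝ (⊤ : ℕ∞) φ) (hsupp : Function.support φ ⊆ Set.Ioo 0 1) :
    |∫ x in (0:ℝ)..1, f (x / ε) * φ x|
      ≤ ε * (⨆ y ∈ Set.Icc (0:ℝ) 1, |∫ t in (0:ℝ)..y, f t|)
          * ∫ x in (0:ℝ)..1, |deriv φ x| := by
  set F : ℝ → ℝ := fun t => ∫ s in (0:ℝ)..t, f s with hFdef
  have hfper : Function.Periodic f 1 := hper
  have hFD : ∀ t, HasDerivAt F (f t) t := F_aux_hasDerivAt f hf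
  have hFcont : Continuous F := by
    rw [continuous_iff_continuousAt]
    exact fun t => (hFD t).continuousAt
  -- F is 1-periodic
  have hFper : Function.Periodic F 1 := by
    intro t
    have h1 : (∫ s in t..(t + 1), f s) = ∫ s in (0:ℝ)..(0 + 1), f s :=
      hfper.intervalIntegral_add_eq t 0
    have h2 : F (t + 1) = F t + ∫ s in t..(t + 1), f s :=
      (intervalIntegral.integral_add_adjacent_intervals
        (hf.intervalIntegrable 0 t) (hf.intervalIntegrable t (t + 1))).symm
    rw [h2, h1]
    simpa using hmean
  set M : ℝ := ⨆ y ∈ Set.Icc (0:ℝ) 1, |F y| with hMdef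
  have hbdd : BddAbove ((fun y => |F y|) '' Set.Icc (0:ℝ) 1) :=
    (isCompact_Icc.image (continuous_abs.comp hFcont)).bddAbove
  obtain ⟨B, hB⟩ := hbdd
  have houter : BddAbove (Set.range fun y => ⨆ (_ : y ∈ Set.Icc (0:ℝ) 1), |F y|) := by
    refine ⟨max B 0, ?_⟩
    rintro _ ⟨y, rfl⟩
    dsimp only
    by_cases hy : y ∈ Set.Icc (0:ℝ) 1
    · rw [ciSup_pos hy]
      exact le_max_of_le_left (hB ⟨y, hy, rfl⟩)
    · haveI : IsEmpty (y ∈ Set.Icc (0:ℝ) 1) := ⟨hy⟩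
      rw [Real.iSup_of_isEmpty]
      exact le_max_right _ _
  -- |F t| ≤ M for all t
  have hFM : ∀ t : ℝ, |F t| ≤ M := by
    intro t
    have hfr : F (Int.fract t) = F t := by
      have h := hFper.sub_int_mul_eq (x := t) ⌊t⌋
      rw [mul_one, Int.self_sub_floor] at h
      exact h
    have hc : Int.fract t ∈ Set.Icc (0:ℝ) 1 := ⟨Int.fract_nonneg t, (Int.fract_lt_one t).le⟩
    rw [← hfr, hMdef]
    refine le_ciSup_of_le houter (Int.fract t) ?_
    exact le_ciSup (f := fun _ : Int.fract t ∈ Set.Icc (0:ℝ) 1 => |F (Int.fract t)|)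
      ⟨|F (Int.fract t)|, by rintro x ⟨_, rfl⟩; exact le_rfl⟩ hc
  have hM0 : 0 ≤ M := le_trans (abs_nonneg _) (hFM 0)
  -- φ vanishes at 0 and 1
  have hφ0 : φ 0 = 0 := by
    by_contra h
    exact absurd (hsupp (Function.mem_support.2 h)).1 (lt_irrefl 0)
  have hφ1 : φ 1 = 0 := by
    by_contra h
    exact absurd (hsupp (Function.mem_support.2 h)).2 (lt_irrefl 1)
  have hφdiff : Differentiable ℝ φ := hφ.differentiable (by simp)
  have hφ'cont : Continuous (deriv φ) := hφ.continuous_deriv (by simp)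
  -- integration by parts
  set u : ℝ → ℝ := fun x => ε * F (x / ε) with hudef
  have huD : ∀ x : ℝ, HasDerivAt u (f (x / ε)) x := by
    intro x
    have h1 : HasDerivAt (fun x : ℝ => x / ε) (1 / ε) x := (hasDerivAt_id x).div_const ε
    have h2 : HasDerivAt (fun x => F (x / ε)) (f (x / ε) * (1 / ε)) x :=
      by have := (hFD (x / ε)).comp x h1; exact this
    have h3 := h2.const_mul ε
    rw [show f (x / ε) = ε * (f (x / ε) * (1 / ε)) by field_simp [hε.ne']]
    exact h3
  have hIBP : (∫ x in (0:ℝ)..1, u x * deriv φ x)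
      = u 1 * φ 1 - u 0 * φ 0 - ∫ x in (0:ℝ)..1, f (x / ε) * φ x := by
    apply intervalIntegral.integral_mul_deriv_eq_deriv_mul
      (fun x _ => huD x) (fun x _ => (hφdiff x).hasDerivAt)
      ((hf.comp (continuous_id.div_const ε)).intervalIntegrable 0 1)
      (hφ'cont.intervalIntegrable 0 1)
  have key : (∫ x in (0:ℝ)..1, f (x / ε) * φ x) = -∫ x in (0:ℝ)..1, u x * deriv φ x := by
    rw [hIBP, hφ0, hφ1]
    ring
  rw [key, abs_neg]
  have habs : |∫ x in (0:ℝ)..1, u x * deriv φ x| ≤ ∫ x in (0:ℝ)..1, |u x * deriv φ x| :=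
    intervalIntegral.abs_integral_le_integral_abs zero_le_one
  have hmono : (∫ x in (0:ℝ)..1, |u x * deriv φ x|)
      ≤ ∫ x in (0:ℝ)..1, (ε * M) * |deriv φ x| := by
    apply intervalIntegral.integral_mono_on zero_le_one
    · exact (((continuous_const.mul (hFcont.comp (continuous_id.div_const ε))).mul
        hφ'cont).abs).intervalIntegrable 0 1
    · exact (continuous_const.mul hφ'cont.abs).intervalIntegrable 0 1
    · intro x _
      rw [abs_mul]
      apply mul_le_mul_of_nonneg_right _ (abs_nonneg _)
      rw [hudef]
      simp only [abs_mul, abs_of_pos hε]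
      exact mul_le_mul_of_nonneg_left (hFM (x / ε)) (le_of_lt hε)
  calc |∫ x in (0:ℝ)..1, u x * deriv φ x|
      ≤ ∫ x in (0:ℝ)..1, (ε * M) * |deriv φ x| := habs.trans hmono
    _ = ε * M * ∫ x in (0:ℝ)..1, |deriv φ x| := by
        rw [intervalIntegral.integral_const_mul]
end

section
/- Let F : ℝ → ℝ be continuous and 1-periodic, and K : ℝ → ℝ continuous, 1-periodic with 0 < λ ≤ K. Define w(y) = −∫₀^y (F(s) − c)/K(s) ds + c₁ where c = (∫₀¹ F/K)/(∫₀¹ 1/K) and c₁ makes ∫₀¹ w = 0. Then w is 1-periodic with zero mean and satisfies −(K w')' = F' in the distributional sense on ℝ, i.e., K(y)w'(y) + F(y) = c for all y. -/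
/-!
Because `c` is the `1/K`-weighted average of `F`, the integrand `(F - c) / K` has zero mean over a
period, so its primitive is `1`-periodic. The function `w` is minus that primitive shifted by its
mean, and the fundamental theorem of calculus gives `K w' = -(F - c)`.
-/

open Real MeasureTheory intervalIntegral Function

theorem Function.Periodic.periodic_primitive_of_integral_eq_zero
    {E : Type*} [NormedAddCommGroup E] [NormedSpace ℝ E] {g : ℝ → E} {T : ℝ} (hg : Periodic g T)
    (hint : ∀ a b, IntervalIntegrable g volume a b) (hmean : ∫ x in 0..T, g x = 0) :
    Periodic (fun y => ∫ x in 0..y, g x) T := fun y => by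
  simp only [hg.intervalIntegral_add_eq_add 0 y hint, zero_add, hmean, add_zero]

theorem intervalIntegral.integral_sub_weightedAverage_div_eq_zero {F K : ℝ → ℝ} {a b : ℝ}
    (hFK : IntervalIntegrable (fun y => F y / K y) volume a b)
    (hK : IntervalIntegrable (fun y => (K y)⁻¹) volume a b)
    (hK₀ : ∫ y in a..b, (K y)⁻¹ ≠ 0) :
    ∫ y in a..b, (F y - (∫ y in a..b, F y / K y) / ∫ y in a..b, (K y)⁻¹) / K y = 0 := by
  set c := (∫ y in a..b, F y / K y) / ∫ y in a..b, (K y)⁻¹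
  calc ∫ y in a..b, (F y - c) / K y
      = ∫ y in a..b, (F y / K y - c * (K y)⁻¹) := by simp only [div_eq_mul_inv, sub_mul]
    _ = (∫ y in a..b, F y / K y) - c * ∫ y in a..b, (K y)⁻¹ := by
      rw [integral_sub hFK (hK.const_mul c), integral_const_mul]
    _ = 0 := by rw [div_mul_cancel₀ _ hK₀, sub_self]

theorem intervalIntegral.integral_neg_add_integral_eq_zero {u : ℝ → ℝ}
    (hu : IntervalIntegrable u volume 0 1) :
    ∫ y in 0..1, (-u y + ∫ t in 0..1, u t) = 0 := by
  rw [integral_add (f := fun y => -u y) hu.neg intervalIntegrable_const, integral_neg,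
    integral_const]
  simp

/-- Explicit solution of the 1D cell problem −(Kw')' = F': w is 1-periodic, mean zero,
    and Kw' + F ≡ c. -/
theorem corrector_cell_problem
    (F K : ℝ → ℝ) (lam : ℝ) (hlam : 0 < lam)
    (hF : Continuous F) (hFper : ∀ y, F (y + 1) = F y)
    (hK : Continuous K) (hKper : ∀ y, K (y + 1) = K y)
    (hKbd : ∀ y, lam ≤ K y)
    (c c₁ : ℝ) (w : ℝ → ℝ)
    (hc : c = (∫ y in (0:ℝ)..1, F y / K y) / (∫ y in (0:ℝ)..1, (K y)⁻¹))
    (hc₁ : c₁ = ∫ y in (0:ℝ)..1, (∫ s in (0:ℝ)..y, (F s - c) / K s))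
    (hw : ∀ y, w y = -(∫ s in (0:ℝ)..y, (F s - c) / K s) + c₁) :
    (∀ y, w (y + 1) = w y) ∧
    (∫ y in (0:ℝ)..1, w y) = 0 ∧
    (∀ y, K y * deriv w y + F y = c) := by
  have hKpos : ∀ y, 0 < K y := fun y => hlam.trans_le (hKbd y)
  have hK₀ : ∀ y, K y ≠ 0 := fun y => (hKpos y).ne'
  set g : ℝ → ℝ := fun s => (F s - c) / K s
  have hg : Continuous g := (hF.sub continuous_const).div hK hK₀
  have hinvK : 0 < ∫ y in (0:ℝ)..1, (K y)⁻¹ :=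
    intervalIntegral_pos_of_pos_on ((hK.inv₀ hK₀).intervalIntegrable 0 1)
      (fun y _ => inv_pos.mpr (hKpos y)) zero_lt_one
  have hg_mean : ∫ s in (0:ℝ)..1, g s = 0 := by
    simpa only [g, hc] using integral_sub_weightedAverage_div_eq_zero
      ((hF.div hK hK₀).intervalIntegrable 0 1) ((hK.inv₀ hK₀).intervalIntegrable 0 1) hinvK.ne'
  have hg_per : Periodic g 1 := fun s => by simp only [g, hFper, hKper]
  have hw' : w = fun y => -(∫ s in (0:ℝ)..y, g s) + c₁ := funext hw
  refine ⟨fun y => ?_, ?_, fun y => ?_⟩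
  · simp only [hw, hg_per.periodic_primitive_of_integral_eq_zero
      (fun a b => hg.intervalIntegrable a b) hg_mean y]
  · rw [hw', hc₁]
    exact integral_neg_add_integral_eq_zero
      ((continuous_primitive (fun a b => hg.intervalIntegrable a b) 0).intervalIntegrable 0 1)
  · rw [hw', deriv_add_const, deriv.fun_neg, hg.deriv_integral, mul_neg,
      mul_div_cancel₀ _ (hK₀ y)]
    ring
end
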